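/- Let α, β be nonzero real numbers with α ≠ β, let λ ≥ 1 and set t = (λ + 1/λ)/2. If t = ψ(α,β), then there exists a nonzero vector v₀ ∈ ℝ² such that {v ∈ ℝ² : det(X_α(v), X_β^λ(v)) = 0} = ℝ·v₀; that is, the tangency set of the pair (L_α, L_β^λ) is a single line through the origin. -/

import Mathlib

/-!
`det(X_α(v), X_β^λ(v))` is a binary quadratic form in `v`, whose discriminant equals
`4 q(t)` with `q(s) = α²β²s² + 2αβs + 1 − (α²+1)(β²+1)` and `t = (λ + 1/λ)/2`. The number
`ψ(α,β)` is a root of `q`, so for `t = ψ(α,β)` the form is, up to its nonzero leading coefficient,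
the square of a linear form, and its zero set is the kernel of that linear form.
-/

noncomputable def psi (α β : ℝ) : ℝ :=
  (-(α * β) + |α * β| * Real.sqrt ((α ^ 2 + 1) * (β ^ 2 + 1))) / (α ^ 2 * β ^ 2)

/-- `det2 v w = v₁w₂ − v₂w₁`. -/
def det2 (v w : ℝ × ℝ) : ℝ := v.1 * w.2 - v.2 * w.1

/-- The logarithmic vector field `X_α(x,y) = (x − αy, αx + y)`. -/
def Xlog (α : ℝ) (v : ℝ × ℝ) : ℝ × ℝ := (v.1 - α * v.2, α * v.1 + v.2)

/-- The pushforward of `X_β` by `B_λ = diag(1,λ)`. -/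
noncomputable def XlogLam (β l : ℝ) (v : ℝ × ℝ) : ℝ × ℝ :=
  (v.1 - (β / l) * v.2, l * β * v.1 + v.2)

theorem setOf_quadForm_eq_zero_eq_range_smul {K : Type*} [Field K] [NeZero (2 : K)]
    {A B C : K} (hA : A ≠ 0) (hdisc : discrim A B C = 0) :
    {v : K × K | A * v.1 ^ 2 + B * v.1 * v.2 + C * v.2 ^ 2 = 0} =
      Set.range fun c : K => c • (-B, 2 * A) := by
  rw [discrim, sub_eq_zero] at hdisc
  have h2A : (2 : K) * A ≠ 0 := mul_ne_zero two_ne_zero hA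
  ext ⟨x, y⟩
  simp only [Set.mem_ofPred_eq, Set.mem_range, Prod.smul_mk, smul_eq_mul, Prod.mk.injEq]
  constructor
  · intro h
    -- `4A (Ax² + Bxy + Cy²) = (2Ax + By)²` once `B² = 4AC`.
    have hlin : 2 * A * x + B * y = 0 :=
      pow_eq_zero_iff two_ne_zero |>.1 <| by linear_combination (4 * A) * h + y ^ 2 * hdisc
    refine ⟨y / (2 * A), ?_, div_mul_cancel₀ y h2A⟩
    field_simp
    linear_combination -hlin
  · rintro ⟨c, rfl, rfl⟩
    linear_combination (-(A * c ^ 2)) * hdisc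

theorem psi_sq_add (α β : ℝ) (hα : α ≠ 0) (hβ : β ≠ 0) :
    α ^ 2 * β ^ 2 * psi α β ^ 2 + 2 * (α * β) * psi α β + 1 = (α ^ 2 + 1) * (β ^ 2 + 1) := by
  have hαβ : α ^ 2 * β ^ 2 ≠ 0 := by positivity
  have hsqrt : Real.sqrt ((α ^ 2 + 1) * (β ^ 2 + 1)) ^ 2 = (α ^ 2 + 1) * (β ^ 2 + 1) :=
    Real.sq_sqrt (by positivity)
  have hlin : α ^ 2 * β ^ 2 * psi α β + α * β =
      |α * β| * Real.sqrt ((α ^ 2 + 1) * (β ^ 2 + 1)) := by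
    rw [psi, mul_div_cancel₀ _ hαβ]
    ring
  have hsq := congrArg (· ^ 2) hlin
  simp only [mul_pow, sq_abs, hsqrt] at hsq
  apply mul_left_cancel₀ hαβ
  linear_combination hsq

theorem det2_Xlog_XlogLam (α β : ℝ) {l : ℝ} (hl : l ≠ 0) (v : ℝ × ℝ) :
    det2 (Xlog α v) (XlogLam β l v) =
      (l * β - α) * v.1 ^ 2 + α * β * (1 / l - l) * v.1 * v.2 + (β / l - α) * v.2 ^ 2 := by
  simp only [det2, Xlog, XlogLam]
  field_simp
  ring

theorem discrim_det2_Xlog_XlogLam (α β : ℝ) {l : ℝ} (hl : l ≠ 0) :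
    discrim (l * β - α) (α * β * (1 / l - l)) (β / l - α) =
      4 * (α ^ 2 * β ^ 2 * ((l + 1 / l) / 2) ^ 2 + 2 * (α * β) * ((l + 1 / l) / 2) + 1 -
        (α ^ 2 + 1) * (β ^ 2 + 1)) := by
  rw [discrim]
  field_simp
  ring

theorem leadingCoeff_det2_Xlog_XlogLam_ne_zero {α β l : ℝ} (hα : α ≠ 0) (hβ : β ≠ 0)
    (hαβ : α ≠ β) (hl : 0 < l)
    (hdisc : discrim (l * β - α) (α * β * (1 / l - l)) (β / l - α) = 0) :
    l * β - α ≠ 0 := by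
  intro hA
  rw [discrim, hA, mul_zero, zero_mul, sub_zero, sq_eq_zero_iff,
    mul_eq_zero, or_iff_right (mul_ne_zero hα hβ), sub_eq_zero, div_eq_iff hl.ne'] at hdisc
  have hl1 : l = 1 := by nlinarith
  subst hl1
  exact hαβ (by linarith)

theorem tangency_set_one_line (α β l : ℝ) (hα : α ≠ 0) (hβ : β ≠ 0)
    (hαβ : α ≠ β) (hl : 1 ≤ l) (ht : (l + 1 / l) / 2 = psi α β) :
    ∃ v₀ : ℝ × ℝ, v₀ ≠ 0 ∧
      {v : ℝ × ℝ | det2 (Xlog α v) (XlogLam β l v) = 0} =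
        Set.range fun c : ℝ => c • v₀ := by
  have hl0 : 0 < l := zero_lt_one.trans_le hl
  have hdisc : discrim (l * β - α) (α * β * (1 / l - l)) (β / l - α) = 0 := by
    rw [discrim_det2_Xlog_XlogLam α β hl0.ne', ht, psi_sq_add α β hα hβ, sub_self, mul_zero]
  have hA := leadingCoeff_det2_Xlog_XlogLam_ne_zero hα hβ hαβ hl0 hdisc
  refine ⟨(-(α * β * (1 / l - l)), 2 * (l * β - α)), ?_, ?_⟩
  · simp [hA]
  · simp only [det2_Xlog_XlogLam α β hl0.ne']
    exact setOf_quadForm_eq_zero_eq_range_smul hA hdisc
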